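/- (Convergence horizon for one step of tensor block randomized Kaczmarz.) Let U ∈ ℝ^{m×m₁×p} and Y, E ∈ ℝ^{m×l×p}, and let X‡ ∈ ℝ^{m₁×l×p} satisfy U∗X‡ = Y. Let (T_U, prob_U) be a block sampling scheme on the row slices of U such that U_μ∗U_μ^⊤ is t-invertible for every μ ∈ T_U, and let d_{T_U} be the largest cardinality of a block in T_U. For X ∈ ℝ^{m₁×l×p} and μ ∈ T_U define X⁺(μ) = X − U_μ^⊤ ∗ (U_μ∗U_μ^⊤)^{-1} ∗ (U_μ∗X − Y_μ − E_μ). Then Σ_{μ∈T_U} prob_U(μ)·‖X⁺(μ) − X‡‖_F² ≤ (1 − σ_min(Σ_{μ∈T_U} prob_U(μ)·bcirc(P_{U_μ})))·‖X − X‡‖_F² + d_{T_U}·p·Σ_{μ∈T_U} prob_U(μ)·‖(bcirc(U_μ)bcirc(U_μ)^⊤)^{-1}‖₂·‖E_μ‖_F². -/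

import Mathlib

open Matrix
open scoped BigOperators

/-- A real third-order tensor with row index `I`, column index `J`, and `p` frontal slices. -/
abbrev Tensor (I J : Type*) (p : ℕ) := I → J → Fin p → ℝ

namespace Tensor

variable {I J K : Type*} {p : ℕ}

/-- Block-circulant matricization: `bcirc A [(i,k),(j,l)] = A i j ((k - l) mod p)`. -/
def bcirc (A : Tensor I J p) : Matrix (I × Fin p) (J × Fin p) ℝ :=
  Matrix.of fun ik jl => A ik.1 jl.1 (ik.2 - jl.2)

/-- Unfolding along the second mode: `unfold B [(j,k), i] = B j i k`. -/
def unfold {S : Type*} (B : Tensor J S p) : Matrix (J × Fin p) S ℝ :=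
  Matrix.of fun jk s => B jk.1 s jk.2

/-- The t-product, the unique tensor with `unfold (A ∗ B) = bcirc A * unfold B`. -/
def tprod [Fintype J] (A : Tensor I J p) (B : Tensor J K p) : Tensor I K p :=
  fun i s k => ∑ j : J, ∑ l : Fin p, A i j (k - l) * B j s l

/-- Tensor transpose: `Aᵀ j i k = A i j ((-k) mod p)`. -/
def ttrans (A : Tensor I J p) : Tensor J I p := fun j i k => A i j (-k)

/-- The identity tensor: first frontal slice is the identity, the others are zero. -/
def tid (I : Type*) [DecidableEq I] (p : ℕ) : Tensor I I p :=
  fun i j k => if i = j ∧ (k : ℕ) = 0 then 1 else 0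

/-- t-invertibility of a square tensor. -/
def TInvertible [Fintype I] [DecidableEq I] (S : Tensor I I p) : Prop :=
  ∃ T : Tensor I I p, tprod S T = tid I p ∧ tprod T S = tid I p

open Classical in
/-- The t-inverse of a square tensor (junk value when not t-invertible). -/
noncomputable def tinv [Fintype I] [DecidableEq I] (S : Tensor I I p) : Tensor I I p :=
  if h : TInvertible S then h.choose else 0

/-- The projection tensor `P_M = Mᵀ ∗ (M ∗ Mᵀ)⁻¹ ∗ M`. -/
noncomputable def proj [Fintype I] [DecidableEq I] [Fintype J] (M : Tensor I J p) :
    Tensor J J p :=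
  tprod (ttrans M) (tprod (tinv (tprod M (ttrans M))) M)

/-- The projection tensor `P_{Mᵀ} = M ∗ (Mᵀ ∗ M)⁻¹ ∗ Mᵀ`. -/
noncomputable def projT [Fintype I] [Fintype J] [DecidableEq J] (M : Tensor I J p) :
    Tensor I I p :=
  tprod M (tprod (tinv (tprod (ttrans M) M)) (ttrans M))

/-- The Frobenius inner product of two tensors. -/
def tinner [Fintype I] [Fintype J] (A B : Tensor I J p) : ℝ :=
  ∑ i : I, ∑ j : J, ∑ k : Fin p, A i j k * B i j k

/-- The squared Frobenius norm of a tensor. -/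
def frobSq [Fintype I] [Fintype J] (A : Tensor I J p) : ℝ :=
  ∑ i : I, ∑ j : J, ∑ k : Fin p, (A i j k) ^ 2

/-- The Frobenius norm of a tensor. -/
noncomputable def frobNorm [Fintype I] [Fintype J] (A : Tensor I J p) : ℝ :=
  Real.sqrt (frobSq A)

/-- The subtensor of the row slices of `U` indexed by `μ`. -/
def rowSub (U : Tensor I J p) (μ : Finset I) : Tensor {i // i ∈ μ} J p :=
  fun i => U i.1

/-- The `j`-th lateral slice of `U`, as an `I × 1 × p` tensor. -/
def latSlice (U : Tensor I J p) (j : J) : Tensor I (Fin 1) p :=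
  fun i _ k => U i j k

/-- One (block) Kaczmarz step for the system with operator `U`, sampled row block `μ`,
current iterate `X` and measurement block `Bμ`:
`X ← X - U_μᵀ ∗ (U_μ ∗ U_μᵀ)⁻¹ ∗ (U_μ ∗ X - Bμ)`. -/
noncomputable def kaczStep [DecidableEq I] [Fintype J] (U : Tensor I J p) (μ : Finset I)
    (X : Tensor J K p) (Bμ : Tensor {i // i ∈ μ} K p) : Tensor J K p :=
  X - tprod (ttrans (rowSub U μ))
    (tprod (tinv (tprod (rowSub U μ) (ttrans (rowSub U μ))))
      (tprod (rowSub U μ) X - Bμ))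

/-- One extended (column-like) step:
`W ← W - U_{:j:} ∗ (U_{:j:}ᵀ ∗ U_{:j:})⁻¹ ∗ (U_{:j:}ᵀ ∗ W)`. -/
noncomputable def extStep [Fintype I] (U : Tensor I J p) (j : J) (W : Tensor I K p) :
    Tensor I K p :=
  W - tprod (latSlice U j)
    (tprod (tinv (tprod (ttrans (latSlice U j)) (latSlice U j)))
      (tprod (ttrans (latSlice U j)) W))

end Tensor

/-- Squared Frobenius norm of a real matrix. -/
def matFrobSq {I J : Type*} [Fintype I] [Fintype J] (A : Matrix I J ℝ) : ℝ :=
  ∑ i : I, ∑ j : J, (A i j) ^ 2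

/-- Spectral norm (largest singular value) of a real matrix, as the supremum of `‖A x‖`
over unit vectors `x`. -/
noncomputable def specNorm {I J : Type*} [Fintype I] [Fintype J] (A : Matrix I J ℝ) : ℝ :=
  sSup {r : ℝ | ∃ x : J → ℝ, (∑ j : J, (x j) ^ 2) = 1 ∧
    r = Real.sqrt (∑ i : I, (A.mulVec x i) ^ 2)}

/-- Smallest eigenvalue of a symmetric real matrix, via the Rayleigh quotient:
`σ_min(S) = inf {xᵀ S x : ‖x‖ = 1}`. -/
noncomputable def minEig {I : Type*} [Fintype I] (S : Matrix I I ℝ) : ℝ :=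
  sInf {r : ℝ | ∃ x : I → ℝ, (∑ i : I, (x i) ^ 2) = 1 ∧
    r = ∑ i : I, x i * S.mulVec x i}

/-! Column by column, the block step is the matrix Kaczmarz update
`z ↦ z - Bᵀ (B Bᵀ)⁻¹ (B z - e)` with `B = bcirc U_μ`, because `bcirc` turns t-products into matrix
products. Since `Bᵀ (B Bᵀ)⁻¹ B` is an orthogonal projection, the error obeys the exact identity
`‖z⁺ - z‡‖² = ‖z - z‡‖² - ⟨z - z‡, P_μ (z - z‡)⟩ + ⟨e, (B Bᵀ)⁻¹ e⟩`. Averaging over `μ`, the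
projection terms are at least `σ_min (∑ prob_μ P_μ) ‖z - z‡‖²` by the Rayleigh quotient, and each
noise term is at most `‖(B Bᵀ)⁻¹‖₂ ‖e‖²`; the factor `d p` is `≥ 1` whenever `e` has an entry. -/

lemma Finset.weighted_sum_le_of_le_sub_add {α : Type*} {T : Finset α} {w f q a b : α → ℝ}
    {F lam d : ℝ} (hw : ∀ μ ∈ T, 0 ≤ w μ) (hw1 : ∑ μ ∈ T, w μ = 1)
    (hf : ∀ μ ∈ T, f μ ≤ F - q μ + d * (a μ * b μ)) (hq : lam * F ≤ ∑ μ ∈ T, w μ * q μ) :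
    ∑ μ ∈ T, w μ * f μ ≤ (1 - lam) * F + d * ∑ μ ∈ T, w μ * a μ * b μ := by
  calc ∑ μ ∈ T, w μ * f μ ≤ ∑ μ ∈ T, w μ * (F - q μ + d * (a μ * b μ)) :=
        Finset.sum_le_sum fun μ hμ => mul_le_mul_of_nonneg_left (hf μ hμ) (hw μ hμ)
    _ = F - ∑ μ ∈ T, w μ * q μ + d * ∑ μ ∈ T, w μ * a μ * b μ := by
        simp only [mul_add, mul_sub, Finset.sum_add_distrib, Finset.sum_sub_distrib]
        rw [← Finset.sum_mul, hw1, one_mul, Finset.mul_sum]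
        congr 1
        exact Finset.sum_congr rfl fun μ _ => by ring
    _ ≤ (1 - lam) * F + d * ∑ μ ∈ T, w μ * a μ * b μ := by linarith

section QuadraticForms

variable {ι κ σ : Type*} [Fintype ι] [Fintype κ] [Fintype σ]

lemma le_mul_sum_sq_of_homogeneous {f : (ι → ℝ) → ℝ} (hf : ∀ (c : ℝ) x, f (c • x) = c ^ 2 * f x)
    {C : ℝ} (hC : ∀ x, ∑ i, x i ^ 2 = 1 → f x ≤ C) (x : ι → ℝ) :
    f x ≤ C * ∑ i, x i ^ 2 := by
  set s := ∑ i, x i ^ 2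
  rcases (Finset.sum_nonneg fun i _ => sq_nonneg (x i) : 0 ≤ s).eq_or_lt with hs | hs
  · have hx : x = 0 := funext fun i => pow_eq_zero_iff two_ne_zero |>.mp <|
      (Finset.sum_eq_zero_iff_of_nonneg fun i _ => sq_nonneg (x i)).mp hs.symm i (Finset.mem_univ i)
    have h0 := hf 0 0
    simp only [zero_smul, zero_pow two_ne_zero, zero_mul] at h0
    rw [hx, h0, show s = 0 from hs.symm, mul_zero]
  set c := √s
  have hc : c ^ 2 = s := Real.sq_sqrt hs.le
  have hunit : ∑ i, (c⁻¹ • x) i ^ 2 = 1 := by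
    simp only [Pi.smul_apply, smul_eq_mul, mul_pow, ← Finset.mul_sum, inv_pow, hc]
    exact inv_mul_cancel₀ hs.ne'
  calc f x = c ^ 2 * f (c⁻¹ • x) := by
        rw [← hf, smul_smul, mul_inv_cancel₀ (Real.sqrt_pos.mpr hs).ne', one_smul]
    _ ≤ c ^ 2 * C := mul_le_mul_of_nonneg_left (hC _ hunit) (sq_nonneg c)
    _ = C * s := by rw [hc, mul_comm]

lemma sum_sq_mulVec_le (A : Matrix ι κ ℝ) (x : κ → ℝ) :
    ∑ i, (A *ᵥ x) i ^ 2 ≤ matFrobSq A * ∑ j, x j ^ 2 := by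
  rw [matFrobSq, Finset.sum_mul]
  exact Finset.sum_le_sum fun i _ =>
    Finset.sum_mul_sq_le_sq_mul_sq Finset.univ (fun j => A i j) x

lemma sqrt_sum_sq_mulVec_le_of_unit (A : Matrix ι κ ℝ) {x : κ → ℝ} (hx : ∑ j, x j ^ 2 = 1) :
    √(∑ i, (A *ᵥ x) i ^ 2) ≤ √(matFrobSq A) :=
  Real.sqrt_le_sqrt <| (sum_sq_mulVec_le A x).trans_eq <| by rw [hx, mul_one]

lemma specNorm_nonneg (A : Matrix ι κ ℝ) : 0 ≤ specNorm A :=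
  Real.sSup_nonneg fun _ ⟨_, _, hr⟩ => hr ▸ Real.sqrt_nonneg _

lemma dotProduct_mulVec_le_specNorm_mul (A : Matrix ι ι ℝ) (x : ι → ℝ) :
    x ⬝ᵥ A *ᵥ x ≤ specNorm A * ∑ i, x i ^ 2 := by
  refine le_mul_sum_sq_of_homogeneous (f := fun x => x ⬝ᵥ A *ᵥ x) (fun c x => ?_)
    (fun x hx => ?_) x
  · simp only [Matrix.mulVec_smul, dotProduct_smul, smul_dotProduct, smul_eq_mul]; ring
  have hbdd : BddAbove {r : ℝ | ∃ x : ι → ℝ, ∑ j, x j ^ 2 = 1 ∧ r = √(∑ i, (A *ᵥ x) i ^ 2)} :=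
    ⟨√(matFrobSq A), fun _ ⟨_, hy, hr⟩ => hr ▸ sqrt_sum_sq_mulVec_le_of_unit A hy⟩
  calc x ⬝ᵥ A *ᵥ x ≤ √(∑ i, x i ^ 2) * √(∑ i, (A *ᵥ x) i ^ 2) :=
        Real.sum_mul_le_sqrt_mul_sqrt _ _ _
    _ = √(∑ i, (A *ᵥ x) i ^ 2) := by rw [hx, Real.sqrt_one, one_mul]
    _ ≤ specNorm A := le_csSup hbdd ⟨x, hx, rfl⟩

lemma minEig_mul_le_dotProduct_mulVec (S : Matrix ι ι ℝ) (x : ι → ℝ) :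
    minEig S * ∑ i, x i ^ 2 ≤ x ⬝ᵥ S *ᵥ x := by
  suffices -(x ⬝ᵥ S *ᵥ x) ≤ -minEig S * ∑ i, x i ^ 2 by linarith
  refine le_mul_sum_sq_of_homogeneous (f := fun x => -(x ⬝ᵥ S *ᵥ x)) (fun c x => ?_)
    (fun x hx => ?_) x
  · simp only [Matrix.mulVec_smul, dotProduct_smul, smul_dotProduct, smul_eq_mul]; ring
  have hbdd : BddBelow {r : ℝ | ∃ x : ι → ℝ, ∑ i, x i ^ 2 = 1 ∧ r = ∑ i, x i * (S *ᵥ x) i} := by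
    refine ⟨-√(matFrobSq S), fun _ ⟨y, hy, hr⟩ => ?_⟩
    have hcs := Real.sum_mul_le_sqrt_mul_sqrt Finset.univ (-y) (S *ᵥ y)
    simp only [Pi.neg_apply, neg_mul, Finset.sum_neg_distrib, neg_sq, hy, Real.sqrt_one,
      one_mul] at hcs
    linarith [sqrt_sum_sq_mulVec_le_of_unit S hy]
  exact neg_le_neg (csInf_le hbdd ⟨x, hx, rfl⟩)

lemma trace_transpose_mul_mul_eq_sum (A : Matrix κ σ ℝ) (S : Matrix κ κ ℝ) :
    trace (Aᵀ * S * A) = ∑ s, Aᵀ s ⬝ᵥ S *ᵥ Aᵀ s := by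
  rw [Matrix.mul_assoc]
  simp only [trace, diag, mul_apply, transpose_apply, dotProduct, mulVec]

lemma trace_transpose_mul_self_eq_sum (A : Matrix κ σ ℝ) :
    trace (Aᵀ * A) = ∑ s, ∑ k, Aᵀ s k ^ 2 := by
  simp only [trace, diag, mul_apply, transpose_apply, sq]

lemma trace_transpose_mul_mul_le_specNorm_mul (A : Matrix κ σ ℝ) (S : Matrix κ κ ℝ) :
    trace (Aᵀ * S * A) ≤ specNorm S * trace (Aᵀ * A) := by
  rw [trace_transpose_mul_mul_eq_sum, trace_transpose_mul_self_eq_sum, Finset.mul_sum]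
  exact Finset.sum_le_sum fun s _ => dotProduct_mulVec_le_specNorm_mul S (Aᵀ s)

lemma minEig_mul_trace_le (A : Matrix κ σ ℝ) (S : Matrix κ κ ℝ) :
    minEig S * trace (Aᵀ * A) ≤ trace (Aᵀ * S * A) := by
  rw [trace_transpose_mul_mul_eq_sum, trace_transpose_mul_self_eq_sum, Finset.mul_sum]
  exact Finset.sum_le_sum fun s _ => minEig_mul_le_dotProduct_mulVec S (Aᵀ s)

lemma trace_kaczmarz_update [DecidableEq ι] (U : Matrix ι κ ℝ) (hU : IsUnit (U * Uᵀ).det)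
    (Z : Matrix κ σ ℝ) (E : Matrix ι σ ℝ) :
    trace ((Z - Uᵀ * (U * Uᵀ)⁻¹ * (U * Z - E))ᵀ * (Z - Uᵀ * (U * Uᵀ)⁻¹ * (U * Z - E))) =
      trace (Zᵀ * Z) - trace (Zᵀ * (Uᵀ * (U * Uᵀ)⁻¹ * U) * Z) +
        trace (Eᵀ * (U * Uᵀ)⁻¹ * E) := by
  set G := (U * Uᵀ)⁻¹
  have hG : Gᵀ = G := by
    rw [transpose_nonsing_inv, transpose_mul, transpose_transpose]
  have hUG : U * Uᵀ * G = 1 := mul_nonsing_inv _ hU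
  set R := U * Z - E
  have hsq : (Uᵀ * G * R)ᵀ * (Uᵀ * G * R) = Rᵀ * G * R := by
    have hR : U * (Uᵀ * (G * R)) = R := by
      rw [← Matrix.mul_assoc, ← Matrix.mul_assoc, hUG, Matrix.one_mul]
    simp only [transpose_mul, transpose_transpose, hG, Matrix.mul_assoc, hR]
  have hcross : trace ((Uᵀ * G * R)ᵀ * Z) = trace (Zᵀ * (Uᵀ * G * R)) := by
    rw [← trace_transpose, transpose_mul, transpose_transpose]
  -- `G` is symmetric, so the two cross terms between `U * Z` and `E` cancel.
  have hsym : trace (Eᵀ * G * (U * Z)) = trace ((U * Z)ᵀ * G * E) := by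
    rw [← trace_transpose]; simp only [transpose_mul, transpose_transpose, hG, Matrix.mul_assoc]
  have hZ : trace (Zᵀ * (Uᵀ * G * R)) = trace ((U * Z)ᵀ * G * R) := by
    simp only [transpose_mul, Matrix.mul_assoc]
  have hP : trace (Zᵀ * (Uᵀ * G * U) * Z) = trace ((U * Z)ᵀ * G * (U * Z)) := by
    simp only [transpose_mul, Matrix.mul_assoc]
  rw [transpose_sub, Matrix.sub_mul, Matrix.mul_sub Zᵀ, Matrix.mul_sub (Uᵀ * G * R)ᵀ, hsq,
    trace_sub, trace_sub, trace_sub, hcross, hZ, hP]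
  simp only [R, transpose_sub, Matrix.sub_mul, Matrix.mul_sub, trace_sub, hsym]
  ring

end QuadraticForms

namespace Tensor

variable {I J K : Type*} {p : ℕ}

@[simp]
lemma unfold_add {S : Type*} (A B : Tensor J S p) : unfold (A + B) = unfold A + unfold B := rfl

@[simp]
lemma unfold_sub {S : Type*} (A B : Tensor J S p) : unfold (A - B) = unfold A - unfold B := rfl

lemma unfold_tprod [Fintype J] (A : Tensor I J p) (B : Tensor J K p) :
    unfold (tprod A B) = bcirc A * unfold B := by
  ext ⟨i, k⟩ s
  simp [unfold, tprod, bcirc, mul_apply, Fintype.sum_prod_type]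

lemma bcirc_tprod [Fintype J] (A : Tensor I J p) (B : Tensor J K p) :
    bcirc (tprod A B) = bcirc A * bcirc B := by
  obtain _ | p := p
  · ext ⟨_, k⟩; exact k.elim0
  ext ⟨i, k⟩ ⟨j, l⟩
  simp only [bcirc, tprod, mul_apply, of_apply, Fintype.sum_prod_type]
  refine Finset.sum_congr rfl fun j' _ => Fintype.sum_equiv (Equiv.addRight l) _ _ fun l' => ?_
  simp only [Equiv.coe_addRight, sub_sub, add_comm, add_sub_cancel_left]

lemma bcirc_ttrans (A : Tensor I J p) : bcirc (ttrans A) = (bcirc A)ᵀ := by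
  obtain _ | p := p
  · ext ⟨_, k⟩; exact k.elim0
  ext ⟨j, l⟩ ⟨i, k⟩
  simp only [bcirc, ttrans, transpose_apply, of_apply, neg_sub]

lemma bcirc_tid [DecidableEq I] : bcirc (tid I p) = 1 := by
  obtain _ | p := p
  · ext ⟨_, k⟩; exact k.elim0
  ext ⟨i, k⟩ ⟨j, l⟩
  simp only [bcirc, tid, of_apply, one_apply, Prod.mk.injEq, Fin.val_eq_zero_iff, sub_eq_zero]

lemma TInvertible.bcirc_mul_bcirc_tinv [Fintype I] [DecidableEq I] {T : Tensor I I p}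
    (h : TInvertible T) : bcirc T * bcirc (tinv T) = 1 := by
  rw [← bcirc_tprod, tinv, dif_pos h, h.choose_spec.1, bcirc_tid]

lemma TInvertible.bcirc_tinv [Fintype I] [DecidableEq I] {T : Tensor I I p}
    (h : TInvertible T) : bcirc (tinv T) = (bcirc T)⁻¹ :=
  (inv_eq_right_inv h.bcirc_mul_bcirc_tinv).symm

lemma frobSq_eq_trace [Fintype J] [Fintype K] (A : Tensor J K p) :
    frobSq A = trace ((unfold A)ᵀ * unfold A) := by
  rw [frobSq, Finset.sum_comm]
  simp only [trace, diag, mul_apply, transpose_apply, unfold, of_apply, Fintype.sum_prod_type, sq]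

lemma frobSq_nonneg [Fintype J] [Fintype K] (A : Tensor J K p) : 0 ≤ frobSq A := by
  unfold frobSq; positivity

lemma frobSq_le_card_mul_frobSq [Fintype J] [Fintype K] (A : Tensor J K p) :
    frobSq A ≤ (Fintype.card J * p) * frobSq A := by
  rcases Nat.eq_zero_or_pos (Fintype.card J * p) with h | h
  · obtain hJ | hp := Nat.mul_eq_zero.mp h
    · have : IsEmpty J := Fintype.card_eq_zero_iff.mp hJ
      simp [frobSq]
    · subst hp; simp [frobSq]
  · exact le_mul_of_one_le_left (frobSq_nonneg A) (by exact_mod_cast h)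

lemma bcirc_proj [Fintype I] [DecidableEq I] [Fintype J] {M : Tensor I J p}
    (h : TInvertible (tprod M (ttrans M))) :
    bcirc (proj M) = (bcirc M)ᵀ * (bcirc M * (bcirc M)ᵀ)⁻¹ * bcirc M := by
  rw [proj, bcirc_tprod, bcirc_tprod, h.bcirc_tinv, bcirc_tprod, bcirc_ttrans, Matrix.mul_assoc]

lemma unfold_kaczStep_sub [DecidableEq I] [Fintype J] (U : Tensor I J p) (μ : Finset I)
    {X Xd : Tensor J K p} {Yμ : Tensor {i // i ∈ μ} K p} (Eμ : Tensor {i // i ∈ μ} K p)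
    (hY : tprod (rowSub U μ) Xd = Yμ)
    (hinv : TInvertible (tprod (rowSub U μ) (ttrans (rowSub U μ)))) :
    unfold (kaczStep U μ X (Yμ + Eμ) - Xd) =
      unfold (X - Xd) - (bcirc (rowSub U μ))ᵀ * (bcirc (rowSub U μ) * (bcirc (rowSub U μ))ᵀ)⁻¹ *
        (bcirc (rowSub U μ) * unfold (X - Xd) - unfold Eμ) := by
  have hYμ : unfold Yμ = bcirc (rowSub U μ) * unfold Xd := by rw [← hY, unfold_tprod]
  have hG := hinv.bcirc_tinv
  rw [bcirc_tprod, bcirc_ttrans] at hG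
  simp only [kaczStep, unfold_sub, unfold_add, unfold_tprod, bcirc_ttrans, hG, hYμ,
    Matrix.mul_sub, Matrix.mul_add, Matrix.mul_assoc]
  abel

lemma frobSq_kaczStep_sub [DecidableEq I] [Fintype J] [Fintype K] (U : Tensor I J p)
    (μ : Finset I) {X Xd : Tensor J K p} {Yμ : Tensor {i // i ∈ μ} K p}
    (Eμ : Tensor {i // i ∈ μ} K p) (hY : tprod (rowSub U μ) Xd = Yμ)
    (hinv : TInvertible (tprod (rowSub U μ) (ttrans (rowSub U μ)))) :
    frobSq (kaczStep U μ X (Yμ + Eμ) - Xd) =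
      frobSq (X - Xd) -
        trace ((unfold (X - Xd))ᵀ * bcirc (proj (rowSub U μ)) * unfold (X - Xd)) +
        trace ((unfold Eμ)ᵀ * (bcirc (rowSub U μ) * (bcirc (rowSub U μ))ᵀ)⁻¹ * unfold Eμ) := by
  have hdet : IsUnit (bcirc (rowSub U μ) * (bcirc (rowSub U μ))ᵀ).det := by
    refine isUnit_det_of_right_inverse
      (B := bcirc (tinv (tprod (rowSub U μ) (ttrans (rowSub U μ))))) ?_
    rw [← bcirc_ttrans, ← bcirc_tprod]
    exact hinv.bcirc_mul_bcirc_tinv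
  rw [frobSq_eq_trace, unfold_kaczStep_sub U μ Eμ hY hinv, trace_kaczmarz_update _ hdet,
    frobSq_eq_trace, bcirc_proj hinv]

lemma trace_unfold_le_mul_specNorm_mul_frobSq [Fintype I] [Fintype K] {c : ℝ}
    (hc : Fintype.card I * p ≤ c) (A : Tensor I K p) (S : Matrix (I × Fin p) (I × Fin p) ℝ) :
    trace ((unfold A)ᵀ * S * unfold A) ≤ c * (specNorm S * frobSq A) := by
  have hS := specNorm_nonneg S
  calc _ ≤ specNorm S * frobSq A := by
        rw [frobSq_eq_trace]; exact trace_transpose_mul_mul_le_specNorm_mul _ _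
    _ ≤ specNorm S * ((Fintype.card I * p) * frobSq A) :=
        mul_le_mul_of_nonneg_left (frobSq_le_card_mul_frobSq A) hS
    _ ≤ c * (specNorm S * frobSq A) := by
        rw [mul_left_comm]; gcongr; exact mul_nonneg hS (frobSq_nonneg A)

lemma minEig_sum_smul_mul_frobSq_le {α : Type*} [Fintype J] [Fintype K] (T : Finset α)
    (w : α → ℝ) (P : α → Matrix (J × Fin p) (J × Fin p) ℝ) (A : Tensor J K p) :
    minEig (∑ μ ∈ T, w μ • P μ) * frobSq A ≤
      ∑ μ ∈ T, w μ * trace ((unfold A)ᵀ * P μ * unfold A) := by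
  rw [frobSq_eq_trace]
  refine (minEig_mul_trace_le _ _).trans_eq ?_
  simp only [Matrix.mul_sum, Matrix.sum_mul, trace_sum, Matrix.mul_smul, Matrix.smul_mul,
    trace_smul, smul_eq_mul]

end Tensor

open Tensor in
theorem stmt6_general {m m₁ l p : ℕ} (U : Tensor (Fin m) (Fin m₁) p)
    (Y E : Tensor (Fin m) (Fin l) p) (Xd : Tensor (Fin m₁) (Fin l) p)
    (hY : tprod U Xd = Y)
    (TU : Finset (Finset (Fin m)))
    (probU : Finset (Fin m) → ℝ) (hprob : ∀ μ ∈ TU, 0 ≤ probU μ)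
    (hprobsum : ∑ μ ∈ TU, probU μ = 1)
    (hinv : ∀ μ ∈ TU, TInvertible (tprod (rowSub U μ) (ttrans (rowSub U μ))))
    (X : Tensor (Fin m₁) (Fin l) p) :
    ∑ μ ∈ TU, probU μ * frobSq (kaczStep U μ X (rowSub Y μ + rowSub E μ) - Xd) ≤
      (1 - minEig (∑ μ ∈ TU, probU μ • bcirc (proj (rowSub U μ)))) * frobSq (X - Xd) +
        ((TU.sup Finset.card : ℕ) : ℝ) * p *
          ∑ μ ∈ TU, probU μ *
            specNorm ((bcirc (rowSub U μ) * (bcirc (rowSub U μ))ᵀ)⁻¹) *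
            frobSq (rowSub E μ) := by
  refine Finset.weighted_sum_le_of_le_sub_add hprob hprobsum (fun μ hμ => ?_)
    (minEig_sum_smul_mul_frobSq_le TU probU (fun μ => bcirc (proj (rowSub U μ))) (X - Xd))
  have hcard : (Fintype.card {i // i ∈ μ} * p : ℝ) ≤ ((TU.sup Finset.card : ℕ) : ℝ) * p := by
    rw [Fintype.card_coe]
    exact mul_le_mul_of_nonneg_right (by exact_mod_cast Finset.le_sup (f := Finset.card) hμ)
      p.cast_nonneg
  rw [frobSq_kaczStep_sub U μ (rowSub E μ) (by rw [← hY]; rfl) (hinv μ hμ)]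
  linarith [trace_unfold_le_mul_specNorm_mul_frobSq hcard (rowSub E μ)
    (bcirc (rowSub U μ) * (bcirc (rowSub U μ))ᵀ)⁻¹]

open Tensor in
/-- convergence horizon for one step of tensor block randomized Kaczmarz with
noisy measurements `Y + E`, where `U∗X‡ = Y`. -/
theorem stmt6 {m m₁ l p : ℕ} (U : Tensor (Fin m) (Fin m₁) p)
    (Y E : Tensor (Fin m) (Fin l) p) (Xd : Tensor (Fin m₁) (Fin l) p)
    (hY : tprod U Xd = Y)
    (TU : Finset (Finset (Fin m))) (hTUne : ∀ μ ∈ TU, μ.Nonempty)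
    (probU : Finset (Fin m) → ℝ) (hprob : ∀ μ ∈ TU, 0 ≤ probU μ)
    (hprobsum : ∑ μ ∈ TU, probU μ = 1)
    (hinv : ∀ μ ∈ TU, TInvertible (tprod (rowSub U μ) (ttrans (rowSub U μ))))
    (X : Tensor (Fin m₁) (Fin l) p) :
    ∑ μ ∈ TU, probU μ * frobSq (kaczStep U μ X (rowSub Y μ + rowSub E μ) - Xd) ≤
      (1 - minEig (∑ μ ∈ TU, probU μ • bcirc (proj (rowSub U μ)))) * frobSq (X - Xd) +
        ((TU.sup Finset.card : ℕ) : ℝ) * p *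
          ∑ μ ∈ TU, probU μ *
            specNorm ((bcirc (rowSub U μ) * (bcirc (rowSub U μ))ᵀ)⁻¹) *
            frobSq (rowSub E μ) :=
  stmt6_general U Y E Xd hY TU probU hprob hprobsum hinv X
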